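/- arXiv:1902.07741 — 2 statements merged into one kernel-verified Lean document; each statement's English description precedes it below -/
import Mathlib

section
/- W is an autoepistemic (FAEEL equilibrium) world view of a theory Γ if and only if W is both an S5-equilibrium model of Γ and a weak autoepistemic world view of Γ. -/
/-- Propositional interpretations are sets of atoms (atoms are naturals). -/
abbrev Interp := Set ℕ

/-- Propositional formulas. -/
inductive PForm : Type
  | bot : PForm
  | atom : ℕ → PForm
  | and : PForm → PForm → PForm
  | or : PForm → PForm → PForm
  | imp : PForm → PForm → PForm

/-- Classical satisfaction. -/
def csat (T : Interp) : PForm → Prop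
  | .bot => False
  | .atom a => a ∈ T
  | .and φ ψ => csat T φ ∧ csat T ψ
  | .or φ ψ => csat T φ ∨ csat T ψ
  | .imp φ ψ => csat T φ → csat T ψ

/-- Here-and-There satisfaction. -/
def htsat (H T : Interp) : PForm → Prop
  | .bot => False
  | .atom a => a ∈ H
  | .and φ ψ => htsat H T φ ∧ htsat H T ψ
  | .or φ ψ => htsat H T φ ∨ htsat H T ψ
  | .imp φ ψ => (csat T φ → csat T ψ) ∧ (htsat H T φ → htsat H T ψ)

/-- Propositional negation. -/
def pneg (φ : PForm) : PForm := .imp φ .bot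

/-- Stable (equilibrium) model of a propositional theory. -/
def stable (Γ : Set PForm) (T : Interp) : Prop :=
  (∀ φ ∈ Γ, htsat T T φ) ∧ ¬ ∃ H, H ⊂ T ∧ ∀ φ ∈ Γ, htsat H T φ

/-- Epistemic formulas (with modality `L`). -/
inductive EForm : Type
  | bot : EForm
  | atom : ℕ → EForm
  | and : EForm → EForm → EForm
  | or : EForm → EForm → EForm
  | imp : EForm → EForm → EForm
  | L : EForm → EForm

/-- Epistemic negation. -/
def eneg (φ : EForm) : EForm := .imp φ .bot

/-- Belief views: sets of HT-pairs (here, there). -/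
abbrev View := Set (Interp × Interp)

/-- Total projection Wᵗ of a view. -/
def tproj (W : View) : View := {p | ∃ q ∈ W, p = (q.2, q.2)}

/-- FAEEL satisfaction ⟨W,H,T⟩ ⊨ φ. -/
def esat : EForm → View → Interp → Interp → Prop
  | .bot, _, _, _ => False
  | .atom a, _, H, _ => a ∈ H
  | .and φ ψ, W, H, T => esat φ W H T ∧ esat ψ W H T
  | .or φ ψ, W, H, T => esat φ W H T ∨ esat ψ W H T
  | .imp φ ψ, W, H, T =>
      (esat φ W H T → esat ψ W H T) ∧ (esat φ (tproj W) T T → esat ψ (tproj W) T T)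
  | .L φ, W, _, _ => ∀ p ∈ W, esat φ W p.1 p.2

/-- Every pair of the view is an HT-pair (here ⊆ there). -/
def isHTView (W : View) : Prop := ∀ p ∈ W, p.1 ⊆ p.2

/-- A view is total if all its pairs are total. -/
def totalView (W : View) : Prop := ∀ p ∈ W, p.1 = p.2

/-- Lift a set of propositional interpretations to a total view. -/
def liftV (Ws : Set Interp) : View := {p | ∃ T ∈ Ws, p = (T, T)}

/-- Embedding of propositional formulas into epistemic formulas. -/
def e : PForm → EForm
  | .bot => .bot
  | .atom a => .atom a
  | .and φ ψ => .and (e φ) (e ψ)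
  | .or φ ψ => .or (e φ) (e ψ)
  | .imp φ ψ => .imp (e φ) (e ψ)

/-- ⟨W,H,T⟩ is a belief model of Γ: all pairs in W ∪ {⟨H,T⟩} satisfy all formulas. -/
def isBeliefModel (W : View) (H T : Interp) (Γ : Set EForm) : Prop :=
  ∀ φ ∈ Γ, ∀ p ∈ insert (H, T) W, esat φ W p.1 p.2

/-- The order ⪯ on belief interpretations. -/
def bleq (W' : View) (H' T' : Interp) (W : View) (H T : Interp) : Prop :=
  T' = T ∧ H' ⊆ H ∧
  (∀ p ∈ W, ∃ H'', (H'', p.2) ∈ W' ∧ H'' ⊆ p.1) ∧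
  (∀ p ∈ W', ∃ H'', (H'', p.2) ∈ W ∧ p.1 ⊆ H'')

/-- The strict order ≺ on belief interpretations. -/
def blt (W' : View) (H' T' : Interp) (W : View) (H T : Interp) : Prop :=
  bleq W' H' T' W H T ∧ ¬ (W' = W ∧ H' = H ∧ T' = T)

/-- ⟨W,T⟩ is an equilibrium belief (KD45-equilibrium) model of Γ. -/
def eqBelief (W : View) (T : Interp) (Γ : Set EForm) : Prop :=
  isBeliefModel W T T Γ ∧
  ¬ ∃ W' H' T', isBeliefModel W' H' T' Γ ∧ blt W' H' T' W T T

/-- ⟨W,T⟩ is a weak KD45-equilibrium model of Γ (minimal among semi-total belief models). -/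
def weakEqBelief (W : View) (T : Interp) (Γ : Set EForm) : Prop :=
  isBeliefModel W T T Γ ∧
  ¬ ∃ W' H' T', totalView W' ∧ isBeliefModel W' H' T' Γ ∧ blt W' H' T' W T T

/-- FAEEL (autoepistemic) equilibrium world view. -/
def autoWV (Ws : Set Interp) (Γ : Set EForm) : Prop :=
  Ws = {T | eqBelief (liftV Ws) T Γ}

/-- Weak autoepistemic world view. -/
def weakWV (Ws : Set Interp) (Γ : Set EForm) : Prop :=
  Ws = {T | weakEqBelief (liftV Ws) T Γ}

/-- W is an S5-HT-model of Γ. -/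
def s5model (W : View) (Γ : Set EForm) : Prop :=
  ∀ φ ∈ Γ, ∀ p ∈ W, esat φ W p.1 p.2

/-- The order ⪯ on S5-HT-interpretations. -/
def s5le (W' W : View) : Prop :=
  (∀ p ∈ W, ∃ H', (H', p.2) ∈ W' ∧ H' ⊆ p.1) ∧
  (∀ p ∈ W', ∃ H, (H, p.2) ∈ W ∧ p.1 ⊆ H)

/-- The strict order ≺ on S5-HT-interpretations. -/
def s5lt (W' W : View) : Prop := s5le W' W ∧ W' ≠ W

/-- S5-equilibrium model: total S5-HT-model minimal among S5-HT-models. -/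
def s5eq (W : View) (Γ : Set EForm) : Prop :=
  totalView W ∧ s5model W Γ ∧ ¬ ∃ W', s5model W' Γ ∧ s5lt W' W

/-- Subjective reduct of a formula w.r.t. a view: replace each maximal `L ψ`
by ⊤ if W ⊨ L ψ, by ⊥ otherwise; yields a propositional formula. -/
noncomputable def reductP : EForm → View → PForm
  | .bot, _ => .bot
  | .atom a, _ => .atom a
  | .and φ ψ, W => .and (reductP φ W) (reductP ψ W)
  | .or φ ψ, W => .or (reductP φ W) (reductP ψ W)
  | .imp φ ψ, W => .imp (reductP φ W) (reductP ψ W)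
  | .L φ, W =>
      @ite _ (∀ p ∈ W, esat φ W p.1 p.2) (Classical.propDecidable _)
        (PForm.imp .bot .bot) .bot

/-- G91-world view: W = SM[Γ^W]. -/
def g91wv (Ws : Set Interp) (Γ : Set EForm) : Prop :=
  Ws = {T | stable ((fun φ => reductP φ (liftV Ws)) '' Γ) T}

/-- Objective literals: a, ¬a, ¬¬a. -/
inductive OLit : Type
  | pos : ℕ → OLit
  | neg : ℕ → OLit
  | nneg : ℕ → OLit

/-- Body literals: objective literals and subjective literals L l, ¬L l, ¬¬L l. -/
inductive Lit : Type
  | obj : OLit → Lit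
  | kpos : OLit → Lit
  | kneg : OLit → Lit
  | knneg : OLit → Lit

/-- A rule a₁ ∨ … ∨ aₙ ← B₁ ∧ … ∧ Bₘ. -/
structure Rule where
  head : List ℕ
  body : List Lit

def olitE : OLit → EForm
  | .pos a => .atom a
  | .neg a => eneg (.atom a)
  | .nneg a => eneg (eneg (.atom a))

def litE : Lit → EForm
  | .obj l => olitE l
  | .kpos l => .L (olitE l)
  | .kneg l => eneg (.L (olitE l))
  | .knneg l => eneg (eneg (.L (olitE l)))

/-- Body of a rule as a formula (conjunction; ⊤ if empty). -/
def bodyE (r : Rule) : EForm := r.body.foldr (fun l φ => .and (litE l) φ) (eneg .bot)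

/-- Head of a rule as a formula (disjunction; ⊥ if empty). -/
def headE (r : Rule) : EForm := r.head.foldr (fun a φ => .or (.atom a) φ) .bot

/-- A rule as a formula. -/
def ruleE (r : Rule) : EForm := .imp (bodyE r) (headE r)

def headSet (r : Rule) : Set ℕ := {a | a ∈ r.head}

/-- Atoms of positive objective body literals. -/
def bodyObPos (r : Rule) : Set ℕ := {a | Lit.obj (OLit.pos a) ∈ r.body}

def olitAtom : OLit → ℕ
  | .pos a => a
  | .neg a => a
  | .nneg a => a

/-- Atoms of positive subjective body literals. -/
def bodySubPos (r : Rule) : Set ℕ := {a | ∃ l, Lit.kpos l ∈ r.body ∧ olitAtom l = a}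

/-- U is an unfounded set w.r.t. program P and (total) view W. -/
def unfoundedSet (P : Set Rule) (W : View) (U : Set (Interp × Interp)) : Prop :=
  U.Nonempty ∧ ∀ p ∈ U, ¬ ∃ r ∈ P, (headSet r ∩ p.1).Nonempty ∧
    esat (bodyE r) W p.2 p.2 ∧
    bodyObPos r ∩ p.1 = ∅ ∧
    (headSet r \ p.1) ∩ p.2 = ∅ ∧
    bodySubPos r ∩ (⋃ q ∈ U, q.1) = ∅

/-- W is founded w.r.t. P: no unfounded set all of whose pairs ⟨X,I⟩ have
I ∈ W and X ∩ I ≠ ∅. -/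
def founded (P : Set Rule) (W : View) : Prop :=
  ¬ ∃ U, unfoundedSet P W U ∧ ∀ p ∈ U, (p.2, p.2) ∈ W ∧ (p.1 ∩ p.2).Nonempty

/-- Every atom occurrence is in the scope of L. -/
def subjective : EForm → Prop
  | .bot => True
  | .atom _ => False
  | .and φ ψ => subjective φ ∧ subjective ψ
  | .or φ ψ => subjective φ ∧ subjective ψ
  | .imp φ ψ => subjective φ ∧ subjective ψ
  | .L _ => True

/-- Every occurrence of L is in the scope of negation (χ → ⊥). -/
def guarded : EForm → Prop
  | .and φ ψ => guarded φ ∧ guarded ψ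
  | .or φ ψ => guarded φ ∧ guarded ψ
  | .imp _ .bot => True
  | .imp φ ψ => guarded φ ∧ guarded ψ
  | .L _ => False
  | _ => True
lemma liftV_total (Ws : Set Interp) : totalView (liftV Ws) := by
  rintro p ⟨T, hT, rfl⟩; rfl

lemma eq_to_weak {W : View} {T : Interp} {Γ : Set EForm}
    (h : eqBelief W T Γ) : weakEqBelief W T Γ := by
  refine ⟨h.1, ?_⟩
  rintro ⟨W', H', T', _, hb, hl⟩
  exact h.2 ⟨W', H', T', hb, hl⟩

lemma weak_to_eq {Ws : Set Interp} {T : Interp} {Γ : Set EForm}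
    (hs5 : s5eq (liftV Ws) Γ) (h : weakEqBelief (liftV Ws) T Γ) :
    eqBelief (liftV Ws) T Γ := by
  refine ⟨h.1, ?_⟩
  rintro ⟨W', H', T', hb, hl⟩
  by_cases hW : W' = liftV Ws
  · exact h.2 ⟨W', H', T', hW ▸ liftV_total Ws, hb, hl⟩
  · refine hs5.2.2 ⟨W', ?_, ⟨hl.1.2.2.1, hl.1.2.2.2⟩, hW⟩
    intro φ hφ p hp
    exact hb φ hφ p (Set.mem_insert_of_mem _ hp)

lemma auto_s5eq {Ws : Set Interp} {Γ : Set EForm}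
    (hA : autoWV Ws Γ) : s5eq (liftV Ws) Γ := by
  refine ⟨liftV_total Ws, ?_, ?_⟩
  · rintro φ hφ p ⟨T, hT, rfl⟩
    have hT' : eqBelief (liftV Ws) T Γ := by rw [hA] at hT; exact hT
    exact hT'.1 φ hφ (T, T) (Set.mem_insert _ _)
  · rintro ⟨W', hmod, hle, hne⟩
    rcases Set.eq_empty_or_nonempty Ws with hE | ⟨T, hT⟩
    · apply hne
      have hLE : liftV Ws = (∅ : View) := by
        ext p; constructor
        · rintro ⟨T, hT, rfl⟩; rw [hE] at hT; exact hT.elim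
        · rintro ⟨⟩
      rw [hLE]
      ext p; constructor
      · intro hp
        obtain ⟨H, hH, -⟩ := hle.2 p hp
        rw [hLE] at hH; exact hH
      · rintro ⟨⟩
    · obtain ⟨H', hH'W', hH'T⟩ := hle.1 (T, T) ⟨T, hT, rfl⟩
      have hT' : eqBelief (liftV Ws) T Γ := by rw [hA] at hT; exact hT
      refine hT'.2 ⟨W', H', T, ?_, ⟨rfl, hH'T, hle.1, hle.2⟩, ?_⟩
      · intro φ hφ p hp
        rcases hp with hp | hp
        · subst hp; exact hmod φ hφ (H', T) hH'W'
        · exact hmod φ hφ p hp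
      · rintro ⟨hW, -, -⟩; exact hne hW

theorem auto_iff_s5eq_and_weak (Γ : Set EForm) (Ws : Set Interp) :
    autoWV Ws Γ ↔ (s5eq (liftV Ws) Γ ∧ weakWV Ws Γ) := by
  have hset : ∀ _ : s5eq (liftV Ws) Γ,
      {T | eqBelief (liftV Ws) T Γ} = {T | weakEqBelief (liftV Ws) T Γ} :=
    fun hs5 => Set.ext fun T => ⟨fun h => eq_to_weak h, fun h => weak_to_eq hs5 h⟩
  constructor
  · intro hA
    have hs5 := auto_s5eq hA
    refine ⟨hs5, ?_⟩
    unfold autoWV at hA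
    unfold weakWV
    rw [← hset hs5]
    exact hA
  · rintro ⟨hs5, hw⟩
    unfold weakWV at hw
    unfold autoWV
    rw [hset hs5]
    exact hw
end

section
/- For any theory Γ in which every occurrence of L is in the scope of negation, the FAEEL equilibrium world views of Γ coincide with the G91-world views of Γ. -/
lemma tproj_idem (V : View) : tproj (tproj V) = tproj V := by
  ext p
  constructor
  · rintro ⟨q, ⟨r, hr, rfl⟩, rfl⟩; exact ⟨r, hr, rfl⟩
  · rintro ⟨q, hq, rfl⟩; exact ⟨(q.2, q.2), ⟨q, hq, rfl⟩, rfl⟩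

lemma mem_liftV {Ws : Set Interp} {p : Interp × Interp} :
    p ∈ liftV Ws ↔ p.2 ∈ Ws ∧ p.1 = p.2 := by
  obtain ⟨a, b⟩ := p
  constructor
  · rintro ⟨T, hT, h⟩; cases h; exact ⟨hT, rfl⟩
  · rintro ⟨h1, h2⟩
    simp only at h1 h2
    subst h2
    exact ⟨_, h1, rfl⟩

lemma tproj_liftV (Ws : Set Interp) : tproj (liftV Ws) = liftV Ws := by
  ext p
  constructor
  · rintro ⟨q, hq, rfl⟩
    rcases mem_liftV.1 hq with ⟨h1, h2⟩
    exact mem_liftV.2 ⟨h1, rfl⟩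
  · intro hp
    rcases mem_liftV.1 hp with ⟨h1, h2⟩
    exact ⟨p, hp, by obtain ⟨a,b⟩ := p; simp_all⟩

lemma isHTView_liftV (Ws : Set Interp) : isHTView (liftV Ws) := by
  intro p hp
  rcases mem_liftV.1 hp with ⟨_, h2⟩
  rw [h2]

lemma htsat_to_csat : ∀ (φ : PForm) (H T : Interp), H ⊆ T → htsat H T φ → csat T φ := by
  intro φ
  induction φ with
  | bot => intro H T _ h; exact h
  | atom a => intro H T hs h; exact hs h
  | and φ ψ ih1 ih2 => intro H T hs h; exact ⟨ih1 H T hs h.1, ih2 H T hs h.2⟩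
  | or φ ψ ih1 ih2 =>
      intro H T hs h
      rcases h with h | h
      · exact Or.inl (ih1 H T hs h)
      · exact Or.inr (ih2 H T hs h)
  | imp φ ψ ih1 ih2 => intro H T hs h; exact h.1

lemma persist : ∀ (φ : EForm) (V : View) (H T : Interp), isHTView V → H ⊆ T →
    esat φ V H T → esat φ (tproj V) T T := by
  intro φ
  induction φ with
  | bot => intro V H T _ _ h; exact h
  | atom a => intro V H T _ hs h; exact hs h
  | and φ ψ ih1 ih2 =>
      intro V H T hV hs h
      exact ⟨ih1 V H T hV hs h.1, ih2 V H T hV hs h.2⟩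
  | or φ ψ ih1 ih2 =>
      intro V H T hV hs h
      rcases h with h | h
      · exact Or.inl (ih1 V H T hV hs h)
      · exact Or.inr (ih2 V H T hV hs h)
  | imp φ ψ ih1 ih2 =>
      intro V H T hV hs h
      have h2 := h.2
      constructor
      · exact h2
      · rw [tproj_idem]; exact h2
  | L φ ih =>
      intro V H T hV hs h
      rintro p ⟨q, hq, rfl⟩
      exact ih V q.1 q.2 hV (hV q hq) (h q hq)

lemma lem2 : ∀ (φ : EForm) (V : View) (T : Interp), tproj V = V →
    (esat φ V T T ↔ csat T (reductP φ V)) := by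
  intro φ
  induction φ with
  | bot => intro V T _; exact Iff.rfl
  | atom a => intro V T _; exact Iff.rfl
  | and φ ψ ih1 ih2 =>
      intro V T hV
      exact and_congr (ih1 V T hV) (ih2 V T hV)
  | or φ ψ ih1 ih2 =>
      intro V T hV
      exact or_congr (ih1 V T hV) (ih2 V T hV)
  | imp φ ψ ih1 ih2 =>
      intro V T hV
      show (esat φ V T T → esat ψ V T T) ∧ (esat φ (tproj V) T T → esat ψ (tproj V) T T)
        ↔ (csat T (reductP φ V) → csat T (reductP ψ V))
      rw [hV]
      constructor
      · intro h hφ; exact (ih2 V T hV).1 (h.1 ((ih1 V T hV).2 hφ))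
      · intro h
        refine ⟨fun hφ => ?_, fun hφ => ?_⟩ <;>
          exact (ih2 V T hV).2 (h ((ih1 V T hV).1 hφ))
  | L φ ih =>
      intro V T hV
      show (∀ p ∈ V, esat φ V p.1 p.2) ↔ csat T (reductP (EForm.L φ) V)
      unfold reductP
      split
      · next hc => exact iff_of_true hc (fun h => h)
      · next hc => exact iff_of_false hc (fun h => h)

lemma guarded_imp (φ ψ : EForm) (h : ψ ≠ EForm.bot) :
    guarded (EForm.imp φ ψ) ↔ guarded φ ∧ guarded ψ := by
  cases ψ <;> simp_all [guarded]

lemma lem1 : ∀ (φ : EForm), guarded φ → ∀ (V : View) (H T : Interp), isHTView V → H ⊆ T →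
    (esat φ V H T ↔ htsat H T (reductP φ (tproj V))) := by
  intro φ
  induction φ with
  | bot => intro _ V H T _ _; exact Iff.rfl
  | atom a => intro _ V H T _ _; exact Iff.rfl
  | and φ ψ ih1 ih2 =>
      intro hgd V H T hV hs
      exact and_congr (ih1 hgd.1 V H T hV hs) (ih2 hgd.2 V H T hV hs)
  | or φ ψ ih1 ih2 =>
      intro hgd V H T hV hs
      exact or_congr (ih1 hgd.1 V H T hV hs) (ih2 hgd.2 V H T hV hs)
  | imp φ ψ ih1 ih2 =>
      intro hgd V H T hV hs
      have hTT : tproj (tproj V) = tproj V := tproj_idem V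
      have h2 := lem2 φ (tproj V) T hTT
      by_cases hb : ψ = EForm.bot
      · subst hb
        show (esat φ V H T → False) ∧ (esat φ (tproj V) T T → False) ↔
          (csat T (reductP φ (tproj V)) → csat T PForm.bot) ∧
          (htsat H T (reductP φ (tproj V)) → htsat H T PForm.bot)
        constructor
        · intro h
          exact ⟨fun hc => h.2 (h2.2 hc), fun hh => h.2 (h2.2 (htsat_to_csat _ H T hs hh))⟩
        · intro h
          exact ⟨fun he => h.1 (h2.1 (persist φ V H T hV hs he)), fun he => h.1 (h2.1 he)⟩
      · obtain ⟨g1, g2⟩ := (guarded_imp φ ψ hb).1 hgd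
        have hψ2 := lem2 ψ (tproj V) T hTT
        show (esat φ V H T → esat ψ V H T) ∧ (esat φ (tproj V) T T → esat ψ (tproj V) T T) ↔
          (csat T (reductP φ (tproj V)) → csat T (reductP ψ (tproj V))) ∧
          (htsat H T (reductP φ (tproj V)) → htsat H T (reductP ψ (tproj V)))
        exact (and_congr (imp_congr (ih1 g1 V H T hV hs) (ih2 g2 V H T hV hs))
          (imp_congr h2 hψ2)).trans and_comm
  | L φ ih => intro hgd; exact hgd.elim

lemma eq_to_stable (Γ : Set EForm) (hg : ∀ φ ∈ Γ, guarded φ) (Ws : Set Interp) (T : Interp)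
    (h : eqBelief (liftV Ws) T Γ) :
    stable ((fun φ => reductP φ (liftV Ws)) '' Γ) T := by
  have hW : tproj (liftV Ws) = liftV Ws := tproj_liftV Ws
  have hHT : isHTView (liftV Ws) := isHTView_liftV Ws
  constructor
  · rintro φ' ⟨φ, hφ, rfl⟩
    have he : esat φ (liftV Ws) T T := h.1 φ hφ (T, T) (Set.mem_insert _ _)
    have := (lem1 φ (hg φ hφ) (liftV Ws) T T hHT (subset_refl T)).1 he
    rwa [hW] at this
  · rintro ⟨H, hHsub, hH⟩
    apply h.2
    refine ⟨liftV Ws, H, T, ?_, ⟨rfl, hHsub.subset, ?_, ?_⟩, ?_⟩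
    · intro φ hφ p hp
      rcases Set.mem_insert_iff.1 hp with rfl | hp
      · have hht : htsat H T (reductP φ (liftV Ws)) := hH _ ⟨φ, hφ, rfl⟩
        exact (lem1 φ (hg φ hφ) (liftV Ws) H T hHT hHsub.subset).2
          (by rw [hW]; exact hht)
      · exact h.1 φ hφ p (Set.mem_insert_of_mem _ hp)
    · intro p hp; exact ⟨p.1, by rw [Prod.mk.eta]; exact hp, subset_refl _⟩
    · intro p hp; exact ⟨p.1, by rw [Prod.mk.eta]; exact hp, subset_refl _⟩
    · rintro ⟨_, hH', _⟩; exact hHsub.ne hH'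

lemma stable_to_eq (Γ : Set EForm) (hg : ∀ φ ∈ Γ, guarded φ) (Ws : Set Interp)
    (hall : ∀ T'' ∈ Ws, stable ((fun φ => reductP φ (liftV Ws)) '' Γ) T'')
    (T : Interp) (hT : stable ((fun φ => reductP φ (liftV Ws)) '' Γ) T) :
    eqBelief (liftV Ws) T Γ := by
  have hW : tproj (liftV Ws) = liftV Ws := tproj_liftV Ws
  have hHTW : isHTView (liftV Ws) := isHTView_liftV Ws
  constructor
  · intro φ hφ p hp
    rcases Set.mem_insert_iff.1 hp with rfl | hp
    · exact (lem1 φ (hg φ hφ) (liftV Ws) T T hHTW (subset_refl T)).2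
        (by rw [hW]; exact hT.1 _ ⟨φ, hφ, rfl⟩)
    · rcases mem_liftV.1 hp with ⟨h2, h1⟩
      obtain ⟨a, b⟩ := p
      simp only at h1 h2
      subst h1
      exact (lem1 φ (hg φ hφ) (liftV Ws) a a hHTW (subset_refl a)).2
        (by rw [hW]; exact (hall a h2).1 _ ⟨φ, hφ, rfl⟩)
  · rintro ⟨W', H', T', hbm, ⟨⟨hTT, hH'sub, hi, hii⟩, hne⟩⟩
    subst hTT
    have hHTW' : isHTView W' := by
      intro p hp
      obtain ⟨H'', hm, hsub⟩ := hii p hp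
      rcases mem_liftV.1 hm with ⟨_, he⟩
      simp only at he
      rwa [he] at hsub
    have htp : tproj W' = liftV Ws := by
      apply Set.Subset.antisymm
      · rintro p ⟨q, hq, rfl⟩
        obtain ⟨H'', hm, _⟩ := hii q hq
        rcases mem_liftV.1 hm with ⟨h2, _⟩
        exact mem_liftV.2 ⟨h2, rfl⟩
      · intro p hp
        rcases mem_liftV.1 hp with ⟨h2, h1⟩
        obtain ⟨H'', hm, _⟩ := hi p hp
        refine ⟨(H'', p.2), hm, ?_⟩
        obtain ⟨a, b⟩ := p
        simp only at h1 ⊢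
        rw [h1]
    have htotal : ∀ p ∈ W', p.1 = p.2 := by
      intro p hp
      obtain ⟨H'', hm, hsub⟩ := hii p hp
      rcases mem_liftV.1 hm with ⟨h2, he⟩
      simp only at h2 he
      subst he
      by_contra hne'
      apply (hall p.2 h2).2
      refine ⟨p.1, ssubset_iff_subset_ne.2 ⟨hsub, hne'⟩, ?_⟩
      rintro φ' ⟨φ, hφ, rfl⟩
      have he2 : esat φ W' p.1 p.2 := hbm φ hφ p (Set.mem_insert_of_mem _ hp)
      have := (lem1 φ (hg φ hφ) W' p.1 p.2 hHTW' hsub).1 he2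
      rwa [htp] at this
    have hWW : W' = liftV Ws := by
      rw [← htp]
      apply Set.Subset.antisymm
      · intro p hp
        refine ⟨p, hp, ?_⟩
        have h := htotal p hp
        obtain ⟨a, b⟩ := p
        simp only at h
        rw [h]
      · rintro p ⟨q, hq, rfl⟩
        have h := htotal q hq
        obtain ⟨a, b⟩ := q
        simp only at h
        subst h
        exact hq
    have hH'T : H' = T' := by
      by_contra hne'
      apply hT.2
      refine ⟨H', ssubset_iff_subset_ne.2 ⟨hH'sub, hne'⟩, ?_⟩
      rintro φ' ⟨φ, hφ, rfl⟩
      have he2 : esat φ W' H' T' := hbm φ hφ (H', T') (Set.mem_insert _ _)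
      have := (lem1 φ (hg φ hφ) W' H' T' hHTW' hH'sub).1 he2
      rwa [htp] at this
    exact hne ⟨hWW, hH'T, rfl⟩

theorem guarded_auto_iff_g91 (Γ : Set EForm) (hg : ∀ φ ∈ Γ, guarded φ)
    (Ws : Set Interp) : autoWV Ws Γ ↔ g91wv Ws Γ := by
  constructor
  · intro h
    have h' : Ws = {T | eqBelief (liftV Ws) T Γ} := h
    have hall : ∀ T'' ∈ Ws, stable ((fun φ => reductP φ (liftV Ws)) '' Γ) T'' := by
      intro T'' h''
      exact eq_to_stable Γ hg Ws T'' (le_of_eq h' h'')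
    show Ws = {T | stable ((fun φ => reductP φ (liftV Ws)) '' Γ) T}
    ext T
    simp only [Set.mem_setOf_eq]
    constructor
    · exact fun hT => hall T hT
    · intro hT
      have := stable_to_eq Γ hg Ws hall T hT
      rw [h']; exact this
  · intro h
    have h' : Ws = {T | stable ((fun φ => reductP φ (liftV Ws)) '' Γ) T} := h
    have hall : ∀ T'' ∈ Ws, stable ((fun φ => reductP φ (liftV Ws)) '' Γ) T'' := by
      intro T'' h''
      exact le_of_eq h' h''
    show Ws = {T | eqBelief (liftV Ws) T Γ}
    ext T
    simp only [Set.mem_setOf_eq]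
    constructor
    · intro hT
      exact stable_to_eq Γ hg Ws hall T (hall T hT)
    · intro hT
      rw [h']
      exact eq_to_stable Γ hg Ws T hT
end
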